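/- arXiv:1309.0265 — 2 statements merged into one kernel-verified Lean document; each statement's English description precedes it below -/
import Mathlib

section
/- In a single-patch SIR model with periodic vaccination rate ζ, with basic reproduction number in the absence of vaccination R̂_0 = ⟨β⟩ b / (μ(μ+γ)) and a constant-vaccination comparison strategy of equal cost having reproduction number R_e^c, the effective reproduction number satisfies R_e = R_e^c - R̂_0 · (1/τ) ∫_0^τ s̄_ζ(t)(1 - β(t)/⟨β⟩) dt. In particular, if β(t) ≡ ⟨β⟩ is constant, then R_e = R_e^c: all periodic vaccination strategies of equal cost yield the same effective reproduction number. -/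
open MeasureTheory intervalIntegral

/-!
Equal cost pins down the total susceptible mass: `∫₀^τ S̄_ζ = bτ/(μ+σ)`, the value of the
constant strategy. Splitting `s̄_ζ (1 - β/⟨β⟩)` by linearity, the `s̄_ζ` part then contributes
exactly `R_e^c`, and the `β s̄_ζ/⟨β⟩` part is `R_e`. For constant `β` the integrand vanishes.
-/

lemma total_susceptible_of_equal_cost {b μ τ σ I : ℝ} (hμ : μ ≠ 0) (hμσ : μ + σ ≠ 0)
    (hcost : σ * b * τ / (μ + σ) = τ * b - μ * I) :
    I = b * τ / (μ + σ) := by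
  field_simp at hcost ⊢
  apply mul_left_cancel₀ hμ
  linear_combination hcost

lemma integral_mul_one_sub_div {f g : ℝ → ℝ} {a b c d : ℝ}
    (hf : IntervalIntegrable f volume a b)
    (hgf : IntervalIntegrable (fun t => g t * f t) volume a b) :
    ∫ t in a..b, c * f t * (1 - g t / d)
      = c * (∫ t in a..b, f t) - c / d * ∫ t in a..b, g t * f t := by
  have hsplit : ∀ t, c * f t * (1 - g t / d) = c * f t - c / d * (g t * f t) :=
    fun t => by ring
  simp_rw [hsplit]
  rw [integral_sub (hf.const_mul c) (hgf.const_mul _), intervalIntegral.integral_const_mul,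
    intervalIntegral.integral_const_mul]

theorem periodic_vs_constant_vaccination_general (b μ γ τ σ : ℝ)
    (hb : 0 < b) (hμ : 0 < μ) (hτ : 0 < τ) (hσ : 0 ≤ σ)
    (β Sζ : ℝ → ℝ)
    (hSint : IntervalIntegrable Sζ volume 0 τ)
    (hβSint : IntervalIntegrable (fun t => β t * Sζ t) volume 0 τ)
    (avgβ : ℝ)
    (havgpos : 0 < avgβ)
    (hcost : σ * b * τ / (μ + σ) = τ * b - μ * ∫ t in (0:ℝ)..τ, Sζ t)
    (Re Rec R0hat : ℝ)
    (hRe : Re = (1/((μ+γ)*τ)) * ∫ t in (0:ℝ)..τ, β t * Sζ t)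
    (hRec : Rec = avgβ * b / ((μ+σ)*(μ+γ)))
    (hR0 : R0hat = avgβ * b / (μ*(μ+γ))) :
    Re = Rec - R0hat * (1/τ) * ∫ t in (0:ℝ)..τ, (μ/b) * Sζ t * (1 - β t / avgβ) ∧
      ((∀ t, β t = avgβ) → Re = Rec) := by
  have hμσ : μ + σ ≠ 0 := by positivity
  have hS : ∫ t in (0:ℝ)..τ, Sζ t = b * τ / (μ + σ) :=
    total_susceptible_of_equal_cost hμ.ne' hμσ hcost
  have hRe_eq : Re = Rec - R0hat * (1/τ) * ∫ t in (0:ℝ)..τ, (μ/b) * Sζ t * (1 - β t / avgβ) := by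
    rw [integral_mul_one_sub_div hSint hβSint, hS, hRe, hRec, hR0]
    field_simp
    ring
  refine ⟨hRe_eq, fun hβ => ?_⟩
  simpa [hβ, havgpos.ne'] using hRe_eq

/-- In the single-patch SIR model with τ-periodic vaccination rate ζ whose
disease-free susceptible solution is `S̄_ζ` and whose cost equals that of the constant
strategy with rate σ, the effective reproduction number
`R_e = (1/((μ+γ)τ)) ∫₀^τ β S̄_ζ` satisfies
`R_e = R_e^c - R̂₀ (1/τ) ∫₀^τ s̄_ζ(t)(1 - β(t)/⟨β⟩) dt`, where `s̄_ζ = (μ/b)S̄_ζ`,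
`R_e^c = ⟨β⟩b/((μ+σ)(μ+γ))` and `R̂₀ = ⟨β⟩b/(μ(μ+γ))`.  In particular, if `β ≡ ⟨β⟩`,
then `R_e = R_e^c`. -/
theorem periodic_vs_constant_vaccination (b μ γ τ σ : ℝ)
    (hb : 0 < b) (hμ : 0 < μ) (hγ : 0 < γ) (hτ : 0 < τ) (hσ : 0 ≤ σ)
    (β Sζ : ℝ → ℝ)
    (hβint : IntervalIntegrable β volume 0 τ)
    (hSint : IntervalIntegrable Sζ volume 0 τ)
    (hβSint : IntervalIntegrable (fun t => β t * Sζ t) volume 0 τ)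
    (avgβ : ℝ) (havg : avgβ = (1/τ) * ∫ t in (0:ℝ)..τ, β t)
    (havgpos : 0 < avgβ)
    (hcost : σ * b * τ / (μ + σ) = τ * b - μ * ∫ t in (0:ℝ)..τ, Sζ t)
    (Re Rec R0hat : ℝ)
    (hRe : Re = (1/((μ+γ)*τ)) * ∫ t in (0:ℝ)..τ, β t * Sζ t)
    (hRec : Rec = avgβ * b / ((μ+σ)*(μ+γ)))
    (hR0 : R0hat = avgβ * b / (μ*(μ+γ))) :
    Re = Rec - R0hat * (1/τ) * ∫ t in (0:ℝ)..τ, (μ/b) * Sζ t * (1 - β t / avgβ) ∧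
      ((∀ t, β t = avgβ) → Re = Rec) :=
  periodic_vs_constant_vaccination_general b μ γ τ σ hb hμ hτ hσ β Sζ hSint hβSint avgβ havgpos
    hcost Re Rec R0hat hRe hRec hR0
end

section
/- In the autonomous N-patch SIR model with environmental transmission (direct transmission rates β_{ij}, environmental transmission rates ε_{ij}, shedding rates ξ_j, decay rates ν_j), the effective reproduction number equals that of the model with no environmental compartments but modified direct transmission rates β̃_{ij} = β_{ij} + (ξ_j/ν_j) ε_{ij}. -/
/-!
`V` is block lower triangular with invertible diagonal blocks, so
`F V⁻¹ = [[(D + E C⁻¹ B̃) A⁻¹, E C⁻¹], [0, 0]]`. The characteristic polynomial of this block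
upper triangular matrix is that of `(D + E C⁻¹ B̃) A⁻¹` times `X ^ N`, so the two matrices have
the same eigenvalues up to `0`, hence the same spectral radius; and `D + E C⁻¹ B̃ = D̃` entrywise
because `C` and `B̃` are diagonal.
-/

/-- The spectral radius of a real square matrix: the supremum of the moduli of its complex
eigenvalues. -/
noncomputable def specRad {n : Type*} [Fintype n] [DecidableEq n] (M : Matrix n n ℝ) : ℝ :=
  sSup {r : ℝ | ∃ z : ℂ,
    Module.End.HasEigenvalue (Matrix.toLin' (M.map (Complex.ofReal ·))) z ∧ r = ‖z‖}

open Matrix Polynomial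

variable {m n : Type*} [Fintype m] [DecidableEq m] [Fintype n] [DecidableEq n]

theorem hasEigenvalue_toLin'_map_ofReal_iff (M : Matrix n n ℝ) (z : ℂ) :
    Module.End.HasEigenvalue (toLin' (M.map (Complex.ofReal ·))) z ↔
      z ∈ M.charpoly.rootSet ℂ := by
  rw [Module.End.hasEigenvalue_iff_mem_spectrum, spectrum_toLin', mem_spectrum_iff_isRoot_charpoly,
    mem_rootSet_of_ne M.charpoly_monic.ne_zero, IsRoot, aeval_def, eval₂_eq_eval_map,
    ← charpoly_map]
  rfl

theorem Real.sSup_insert_zero {s : Set ℝ} (hs : BddAbove s) (h0 : ∀ x ∈ s, 0 ≤ x) :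
    sSup (insert 0 s) = sSup s := by
  rcases s.eq_empty_or_nonempty with rfl | hne
  · simp -- `sSup ∅ = 0` on `ℝ`
  · rw [csSup_insert hs hne, sup_eq_right]
    obtain ⟨x, hx⟩ := hne
    exact (h0 x hx).trans (le_csSup hs hx)

theorem specRad_eq_sSup_insert_zero (M : Matrix n n ℝ) :
    specRad M = sSup (insert 0 ((‖·‖) '' M.charpoly.rootSet ℂ)) := by
  rw [Real.sSup_insert_zero ((rootSet_finite _ _).image _).bddAbove
    (by rintro _ ⟨z, -, rfl⟩; positivity)]
  simp only [specRad, hasEigenvalue_toLin'_map_ofReal_iff]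
  congr 1
  ext r
  simp [eq_comm]

theorem specRad_fromBlocks_zero₂₁_zero₂₂ (M : Matrix m m ℝ) (B : Matrix m n ℝ) :
    specRad (fromBlocks M B 0 0) = specRad M := by
  rw [specRad_eq_sSup_insert_zero, specRad_eq_sSup_insert_zero, charpoly_fromBlocks_zero₂₁,
    charpoly_zero]
  congr 1
  ext r
  simp only [Set.mem_insert_iff, Set.mem_image, mem_rootSet_of_ne M.charpoly_monic.ne_zero,
    mem_rootSet_of_ne (M.charpoly_monic.mul (monic_X_pow _)).ne_zero, map_mul, map_pow, aeval_X,
    mul_eq_zero, pow_eq_zero_iff']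
  constructor
  · rintro (rfl | ⟨z, hz | ⟨rfl, -⟩, rfl⟩)
    exacts [.inl rfl, .inr ⟨z, hz, rfl⟩, .inl norm_zero]
  · rintro (rfl | ⟨z, hz, rfl⟩)
    exacts [.inl rfl, .inr ⟨z, .inl hz, rfl⟩]

theorem fromBlocks_mul_inv_fromBlocks_zero₁₂ {α : Type*} [CommRing α]
    (D : Matrix m m α) (E : Matrix m n α) (A : Matrix m m α) (B : Matrix n m α)
    (C : Matrix n n α) (hAC : IsUnit A ↔ IsUnit C) :
    fromBlocks D E (0 : Matrix n m α) 0 * (fromBlocks A 0 (-B) C)⁻¹ =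
      fromBlocks ((D + E * C⁻¹ * B) * A⁻¹) (E * C⁻¹) 0 0 := by
  rw [inv_fromBlocks_zero₁₂_of_isUnit_iff _ _ _ hAC, fromBlocks_multiply]
  simp only [Matrix.mul_zero, add_zero, zero_add, Matrix.zero_mul, Matrix.mul_neg,
    Matrix.neg_mul, neg_neg, Matrix.add_mul, Matrix.mul_assoc]

theorem environmental_transmission_reproduction_number_general {N : ℕ}
    (β ε : Matrix (Fin N) (Fin N) ℝ) (ξ ν Sbar : Fin N → ℝ)
    (hν : ∀ j, 0 < ν j)
    (A : Matrix (Fin N) (Fin N) ℝ)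
    (hA : IsUnit A.det)
    (D E Bt C : Matrix (Fin N) (Fin N) ℝ)
    (hD : ∀ i j, D i j = β i j * Sbar i)
    (hE : ∀ i j, E i j = ε i j * Sbar i)
    (hB : Bt = Matrix.diagonal ξ)
    (hC : C = Matrix.diagonal ν)
    (F V : Matrix (Fin N ⊕ Fin N) (Fin N ⊕ Fin N) ℝ)
    (hF : F = Matrix.fromBlocks D E 0 0)
    (hV : V = Matrix.fromBlocks A 0 (-Bt) C)
    (Dtilde : Matrix (Fin N) (Fin N) ℝ)
    (hDt : ∀ i j, Dtilde i j = (β i j + ξ j / ν j * ε i j) * Sbar i) :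
    specRad (F * V⁻¹) = specRad (Dtilde * A⁻¹) := by
  have hCunit : IsUnit C := by
    rw [hC, isUnit_diagonal]
    exact Pi.isUnit_iff.2 fun j => (hν j).ne'.isUnit
  have hAC : IsUnit A ↔ IsUnit C := iff_of_true ((isUnit_iff_isUnit_det A).2 hA) hCunit
  have hCinv : C⁻¹ = diagonal ν⁻¹ := by
    refine inv_eq_right_inv ?_
    rw [hC, diagonal_mul_diagonal, ← diagonal_one]
    exact congrArg diagonal (funext fun j => mul_inv_cancel₀ (hν j).ne')
  have hDtilde : Dtilde = D + E * C⁻¹ * Bt := by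
    ext i j
    simp only [hCinv, hB, mul_diagonal, Matrix.add_apply, Pi.inv_apply, hD, hE, hDt]
    ring
  rw [hF, hV, fromBlocks_mul_inv_fromBlocks_zero₁₂ _ _ _ _ _ hAC,
    specRad_fromBlocks_zero₂₁_zero₂₂, hDtilde]

/-- In the autonomous N-patch SIR model with environmental transmission,
the effective reproduction number `ρ(F V⁻¹)` (next-generation matrix of the full model with
environmental compartments) equals the effective reproduction number `ρ(D̃ A⁻¹)` of the model
without environmental compartments but with modified direct transmission rates
`β̃ᵢⱼ = βᵢⱼ + (ξⱼ/νⱼ) εᵢⱼ`. -/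
theorem environmental_transmission_reproduction_number {N : ℕ}
    (β ε : Matrix (Fin N) (Fin N) ℝ) (ξ ν μ γ Sbar : Fin N → ℝ)
    (k : Matrix (Fin N) (Fin N) ℝ)
    (hν : ∀ j, 0 < ν j)
    (A : Matrix (Fin N) (Fin N) ℝ)
    (hAdef : ∀ i j, A i j = if i = j then μ i + γ i + k i i else -(k i j))
    (hA : IsUnit A.det)
    (D E Bt C : Matrix (Fin N) (Fin N) ℝ)
    (hD : ∀ i j, D i j = β i j * Sbar i)
    (hE : ∀ i j, E i j = ε i j * Sbar i)
    (hB : Bt = Matrix.diagonal ξ)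
    (hC : C = Matrix.diagonal ν)
    (F V : Matrix (Fin N ⊕ Fin N) (Fin N ⊕ Fin N) ℝ)
    (hF : F = Matrix.fromBlocks D E 0 0)
    (hV : V = Matrix.fromBlocks A 0 (-Bt) C)
    (Dtilde : Matrix (Fin N) (Fin N) ℝ)
    (hDt : ∀ i j, Dtilde i j = (β i j + ξ j / ν j * ε i j) * Sbar i) :
    specRad (F * V⁻¹) = specRad (Dtilde * A⁻¹) :=
  environmental_transmission_reproduction_number_general β ε ξ ν Sbar hν A hA D E Bt C hD hE hB hC F
    V hF hV Dtilde hDt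
end
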